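/- (Canonical extension) Let L be a bounded lattice and X = D♭(L) = (MPH(L,2_B), E). Then the complete lattice C(X) = MPE(X,2), ordered by φ ≤ ψ iff φ⁻¹(1) ⊆ ψ⁻¹(1), together with the embedding e : L → C(X), a ↦ e_a, is a canonical extension of L: it is a completion of L that is both dense and compact. -/

import Mathlib

namespace CanExt

open Classical

/-- A partial map from `X` into the two-element chain `{0,1}` (encoded as `Bool`,
with `false` playing the role of `0` and `true` the role of `1`);
`φ x = none` means `x` is outside the domain of `φ`. -/
abbrev PMap (X : Type*) := X → Option Bool

/-- The preimage of `1` of a partial map. -/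
def pre1 {X : Type*} (φ : PMap X) : Set X := {x | φ x = some true}

/-- The preimage of `0` of a partial map. -/
def pre0 {X : Type*} (φ : PMap X) : Set X := {x | φ x = some false}

/-- A partial map is `E`-preserving if whenever `x, y` lie in its domain and
`(x,y) ∈ E`, then `φ x ≤ φ y`. -/
def EPres {X : Type*} (E : X → X → Prop) (φ : PMap X) : Prop :=
  ∀ ⦃x y : X⦄, E x y → ∀ ⦃a b : Bool⦄, φ x = some a → φ y = some b → a ≤ b

/-- `PExt ψ φ` : the partial map `ψ` extends the partial map `φ`. -/
def PExt {X : Type*} (ψ φ : PMap X) : Prop :=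
  ∀ ⦃x : X⦄ ⦃a : Bool⦄, φ x = some a → ψ x = some a

/-- The set of maximal partial `E`-preserving maps from `(X,E)` into the
two-element chain `2`. -/
def MPE {X : Type*} (E : X → X → Prop) : Set (PMap X) :=
  {φ | EPres E φ ∧ ∀ ψ : PMap X, EPres E ψ → PExt ψ φ → ψ = φ}

/-- A partial morphism from a graph with topology `(X,E,t)` to `2_τ`:
the preimages of `1` and `0` are `t`-closed (equivalently, the domain is
closed and the restriction to the domain is continuous into discrete `2`),
and the map is `E`-preserving. -/
def PMorphT {X : Type*} (E : X → X → Prop) (t : TopologicalSpace X) (φ : PMap X) : Prop :=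
  EPres E φ ∧ @IsClosed X t (pre1 φ) ∧ @IsClosed X t (pre0 φ)

/-- The set of maximal partial morphisms from `(X,E,t)` to `2_τ`. -/
def MPM {X : Type*} (E : X → X → Prop) (t : TopologicalSpace X) : Set (PMap X) :=
  {φ | PMorphT E t φ ∧ ∀ ψ : PMap X, PMorphT E t ψ → PExt ψ φ → ψ = φ}

/-- The relation `E` between partial maps on a lattice `L`:
`(f,g) ∈ E` iff `f x ≤ g x` for all `x ∈ dom f ∩ dom g`. -/
def ErelP {L : Type*} (f g : PMap L) : Prop :=
  ∀ ⦃x : L⦄ ⦃a b : Bool⦄, f x = some a → g x = some b → a ≤ b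

/-- `f ≤₁ g` iff `f⁻¹(1) ⊆ g⁻¹(1)`. -/
def le1 {L : Type*} (f g : PMap L) : Prop := pre1 f ⊆ pre1 g

/-- `f ≤₂ g` iff `f⁻¹(0) ⊆ g⁻¹(0)`. -/
def le2 {L : Type*} (f g : PMap L) : Prop := pre0 f ⊆ pre0 g

section Lat

variable (L : Type*) [Lattice L] [BoundedOrder L]

/-- A partial homomorphism from a bounded lattice `L` to the two-element
bounded lattice `2_B`: its domain is a `{0,1}`-sublattice of `L` and the
restriction to the domain is a bounded-lattice homomorphism. -/
def PHom (f : PMap L) : Prop :=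
  f ⊥ = some false ∧ f ⊤ = some true ∧
  ∀ ⦃a b : L⦄ ⦃x y : Bool⦄, f a = some x → f b = some y →
    f (a ⊓ b) = some (x ⊓ y) ∧ f (a ⊔ b) = some (x ⊔ y)

/-- The set of maximal partial homomorphisms (MPHs) from `L` to `2_B`. -/
def MPHset : Set (PMap L) := {f | PHom L f ∧ ∀ g : PMap L, PHom L g → PExt g f → g = f}

/-- The underlying set of the graph `D♭(L)`. -/
abbrev MPHsub := {f : PMap L // f ∈ MPHset L}

/-- The relation `E` on `MPH(L, 2_B)`, giving the graph `D♭(L)`. -/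
def EM (f g : MPHsub L) : Prop := ErelP f.1 g.1

/-- The evaluation map `e_a` on `MPH(L,2_B)` : `e_a(f) = f(a)` if `a ∈ dom f`. -/
def evalM (a : L) : PMap (MPHsub L) := fun f => f.1 a

/-- `V_a = {f ∈ MPH(L,2_B) : f(a) = 0}`. -/
def VaM (a : L) : Set (MPHsub L) := {f | f.1 a = some false}

/-- `W_a = {f ∈ MPH(L,2_B) : f(a) = 1}`. -/
def WaM (a : L) : Set (MPHsub L) := {f | f.1 a = some true}

/-- The topology on `MPH(L,2_B)` with the sets `V_a`, `W_a` as a subbasis of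
closed sets. -/
def tauM : TopologicalSpace (MPHsub L) :=
  TopologicalSpace.generateFrom {U | ∃ a : L, U = (VaM L a)ᶜ ∨ U = (WaM L a)ᶜ}

/-- A (nonempty) lattice filter. -/
def IsLatFilter (F : Set L) : Prop :=
  F.Nonempty ∧ (∀ ⦃a b : L⦄, a ∈ F → a ≤ b → b ∈ F) ∧
    (∀ ⦃a b : L⦄, a ∈ F → b ∈ F → a ⊓ b ∈ F)

/-- A (nonempty) lattice ideal. -/
def IsLatIdeal (I : Set L) : Prop :=
  I.Nonempty ∧ (∀ ⦃a b : L⦄, a ∈ I → b ≤ a → b ∈ I) ∧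
    (∀ ⦃a b : L⦄, a ∈ I → b ∈ I → a ⊔ b ∈ I)

/-- The set of special partial homomorphisms (SPHs) from `L` to `2_B`:
`f⁻¹(1)` is a nonempty filter, `f⁻¹(0)` is a nonempty ideal, and they are
disjoint. -/
def SPHset : Set (PMap L) :=
  {f | IsLatFilter L (pre1 f) ∧ IsLatIdeal L (pre0 f) ∧ Disjoint (pre1 f) (pre0 f)}

/-- The underlying set of the graph `D̄♭(L)`. -/
abbrev SPHsub := {f : PMap L // f ∈ SPHset L}

/-- The relation `E` on `SPH(L, 2_B)`, giving the graph `D̄♭(L)`. -/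
def ES (f g : SPHsub L) : Prop := ErelP f.1 g.1

/-- The evaluation map `ē_a` on `SPH(L,2_B)`. -/
def evalS (a : L) : PMap (SPHsub L) := fun f => f.1 a

/-- `V_a = {f ∈ SPH(L,2_B) : f(a) = 0}`. -/
def VaS (a : L) : Set (SPHsub L) := {f | f.1 a = some false}

/-- `W_a = {f ∈ SPH(L,2_B) : f(a) = 1}`. -/
def WaS (a : L) : Set (SPHsub L) := {f | f.1 a = some true}

/-- The topology on `SPH(L,2_B)` with the sets `V_a`, `W_a` as a subbasis of
closed sets. -/
def tauS : TopologicalSpace (SPHsub L) :=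
  TopologicalSpace.generateFrom {U | ∃ a : L, U = (VaS L a)ᶜ ∨ U = (WaS L a)ᶜ}

/-- The carrier of the completion built from `D♭(L)`. -/
abbrev CX := {φ : PMap (MPHsub L) // φ ∈ MPE (EM L)}

/-- The carrier of the completion built from `D̄♭(L)`. -/
abbrev CY := {φ : PMap (SPHsub L) // φ ∈ MPE (ES L)}

end Lat

/-!
For a reflexive relation `E`, maximality pins a partial `E`-preserving map `φ` down completely:
extending `φ` by `1` on the Galois closure of `φ⁻¹(1)` and by `0` on its polar, both taken for the
relation "not `E`", is still `E`-preserving. So `MPE(X,2)` is the concept lattice of `¬E`, a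
complete lattice ordered by `φ⁻¹(1)`.

On the lattice side, a maximal partial homomorphism `L → 2_B` is the same as a maximal disjoint
filter–ideal pair, and by Zorn's lemma every disjoint filter–ideal pair extends to one. Separating
`↑a` from `↓b` makes `a ↦ e_a` an order embedding; separating `f⁻¹(1)` from `↓a` (and dually)
shows that `e_a⁻¹(1)` and `e_a⁻¹(0)` are polar to each other; separating the filter generated
by `A` from the ideal generated by `B` gives compactness. Density holds because `f ∈ φ⁻¹(1)` and
`h ∈ φ⁻¹(0)` are never `E`-related, i.e. `f(c) = 1` and `h(c) = 0` for some `c ∈ L`.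
-/

section Graph

variable {X : Type*} {E : X → X → Prop}

noncomputable def ofSets (P N : Set X) : PMap X :=
  fun x => if x ∈ P then some true else if x ∈ N then some false else none

lemma pre1_ofSets (P N : Set X) : pre1 (ofSets P N) = P := by
  ext x; by_cases hP : x ∈ P <;> simp [pre1, ofSets, hP]

lemma pre0_ofSets {P N : Set X} (h : Disjoint P N) : pre0 (ofSets P N) = N := by
  ext x
  by_cases hP : x ∈ P
  · simp [pre0, ofSets, hP, Set.disjoint_left.1 h hP]
  · by_cases hN : x ∈ N <;> simp [pre0, ofSets, hP, hN]

lemma disjoint_pre1_pre0 (φ : PMap X) : Disjoint (pre1 φ) (pre0 φ) :=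
  Set.disjoint_left.2 fun x (h1 : φ x = some true) (h0 : φ x = some false) => by simp_all

lemma pmap_ext {φ ψ : PMap X} (h1 : pre1 φ = pre1 ψ) (h0 : pre0 φ = pre0 ψ) : φ = ψ := by
  funext x
  have e1 : φ x = some true ↔ ψ x = some true := Set.ext_iff.1 h1 x
  have e0 : φ x = some false ↔ ψ x = some false := Set.ext_iff.1 h0 x
  rcases hφ : φ x with _ | _ | _ <;> rcases hψ : ψ x with _ | _ | _ <;> simp_all

lemma ofSets_pre1_pre0 (φ : PMap X) : ofSets (pre1 φ) (pre0 φ) = φ :=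
  pmap_ext (pre1_ofSets _ _) (pre0_ofSets (disjoint_pre1_pre0 φ))

lemma ofSets_eq_some_iff {P N : Set X} (h : Disjoint P N) {x : X} {a : Bool} :
    ofSets P N x = some a ↔ x ∈ cond a P N := by
  cases a
  exacts [Set.ext_iff.1 (pre0_ofSets h) x, Set.ext_iff.1 (pre1_ofSets P N) x]

lemma pExt_iff {φ ψ : PMap X} : PExt ψ φ ↔ pre1 φ ⊆ pre1 ψ ∧ pre0 φ ⊆ pre0 ψ := by
  refine ⟨fun h => ⟨fun x hx => h hx, fun x hx => h hx⟩, fun ⟨h1, h0⟩ x a hx => ?_⟩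
  cases a
  exacts [h0 hx, h1 hx]

lemma erelP_iff {φ ψ : PMap X} : ErelP φ ψ ↔ Disjoint (pre1 φ) (pre0 ψ) := by
  rw [Set.disjoint_left]
  refine ⟨fun h x h1 h0 => absurd (h h1 h0) (by decide), fun h x a b hφ hψ => ?_⟩
  cases a
  · exact Bool.false_le b
  cases b
  · exact absurd hψ (h hφ)
  · exact le_rfl

lemma ePres_iff {φ : PMap X} : EPres E φ ↔ pre0 φ ⊆ upperPolar (¬E · ·) (pre1 φ) := by
  refine ⟨fun h y hy x hx hxy => absurd (h hxy hx hy) (by decide), fun h x y hxy a b hx hy => ?_⟩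
  cases a
  · exact Bool.false_le b
  cases b
  · exact absurd hxy (h hy hx)
  · exact le_rfl

variable [Std.Refl E]

lemma disjoint_upperPolar_not (A : Set X) : Disjoint A (upperPolar (¬E · ·) A) :=
  Set.disjoint_left.2 fun x hx hx' => hx' hx (refl x)

theorem mem_MPE_iff {φ : PMap X} :
    φ ∈ MPE E ↔ Order.IsExtent (¬E · ·) (pre1 φ) ∧ pre0 φ = upperPolar (¬E · ·) (pre1 φ) := by
  constructor
  · rintro ⟨hpres, hmax⟩
    set A := lowerPolar (¬E · ·) (upperPolar (¬E · ·) (pre1 φ))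
    have hpolar : upperPolar (¬E · ·) A = upperPolar (¬E · ·) (pre1 φ) :=
      upperPolar_lowerPolar_upperPolar _ _
    have hdisj : Disjoint A (upperPolar (¬E · ·) (pre1 φ)) := hpolar ▸ disjoint_upperPolar_not A
    have hclosure : ofSets A (upperPolar (¬E · ·) (pre1 φ)) = φ := by
      refine hmax _ ?_ ?_
      · rw [ePres_iff, pre1_ofSets, pre0_ofSets hdisj, hpolar]
      · rw [pExt_iff, pre1_ofSets, pre0_ofSets hdisj]
        exact ⟨subset_lowerPolar_upperPolar _ _, ePres_iff.1 hpres⟩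
    have h1 := congrArg pre1 hclosure
    have h0 := congrArg pre0 hclosure
    rw [pre1_ofSets] at h1
    rw [pre0_ofSets hdisj] at h0
    exact ⟨Order.isExtent_iff.2 h1, h0.symm⟩
  · rintro ⟨hext, hpre0⟩
    refine ⟨ePres_iff.2 hpre0.subset, fun ψ hψ hψφ => ?_⟩
    obtain ⟨h1, h0⟩ := pExt_iff.1 hψφ
    have hψ' := ePres_iff.1 hψ
    refine pmap_ext (Set.Subset.antisymm ?_ h1) (Set.Subset.antisymm ?_ h0)
    · rw [← hext.eq]
      intro x hx y hy
      exact hψ' (h0 (hpre0 ▸ hy)) hx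
    · rw [hpre0]
      intro y hy x hx
      exact hψ' hy (h1 hx)

variable (E) in
noncomputable def MPE.equivConcept : {φ : PMap X // φ ∈ MPE E} ≃ Concept X X (¬E · ·) where
  toFun φ :=
    { extent := pre1 φ.1
      intent := pre0 φ.1
      upperPolar_extent := (mem_MPE_iff.1 φ.2).2.symm
      lowerPolar_intent := (mem_MPE_iff.1 φ.2).2 ▸ (mem_MPE_iff.1 φ.2).1.eq }
  invFun c := ⟨ofSets c.extent c.intent, mem_MPE_iff.2 <| by
    rw [pre1_ofSets, pre0_ofSets (c.upperPolar_extent ▸ disjoint_upperPolar_not c.extent)]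
    exact ⟨c.isExtent_extent, c.upperPolar_extent.symm⟩⟩
  left_inv φ := Subtype.ext (ofSets_pre1_pre0 φ.1)
  right_inv c := Concept.ext (pre1_ofSets _ _)

end Graph

section FilterIdeal

variable {L : Type*} [Lattice L]

lemma isLatFilter_Ici (a : L) : IsLatFilter L (Set.Ici a) :=
  ⟨⟨a, le_rfl⟩, fun _ _ ha hab => ha.trans hab, fun _ _ => le_inf⟩

lemma isLatIdeal_Iic (a : L) : IsLatIdeal L (Set.Iic a) :=
  ⟨⟨a, le_rfl⟩, fun _ _ ha hba => hba.trans ha, fun _ _ => sup_le⟩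

variable [BoundedOrder L]

lemma IsLatFilter.top_mem {F : Set L} (hF : IsLatFilter L F) : ⊤ ∈ F :=
  hF.1.elim fun _ ha => hF.2.1 ha le_top

lemma IsLatIdeal.bot_mem {I : Set L} (hI : IsLatIdeal L I) : ⊥ ∈ I :=
  hI.1.elim fun _ ha => hI.2.1 ha bot_le

lemma IsLatFilter.finset_inf_mem_iff {F : Set L} (hF : IsLatFilter L F) {s : Finset L} :
    s.inf id ∈ F ↔ ↑s ⊆ F :=
  ⟨fun h _ ha => hF.2.1 h (Finset.inf_le ha),
    Finset.inf_mem F hF.top_mem (fun _ hx _ hy => hF.2.2 hx hy) s id⟩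

lemma IsLatIdeal.finset_sup_mem_iff {I : Set L} (hI : IsLatIdeal L I) {s : Finset L} :
    s.sup id ∈ I ↔ ↑s ⊆ I :=
  ⟨fun h _ ha => hI.2.1 h (Finset.le_sup (f := id) ha),
    Finset.sup_mem I hI.bot_mem (fun _ hx _ hy => hI.2.2 hx hy) s id⟩

lemma isLatFilter_finset_inf_le (A : Set L) :
    IsLatFilter L {x | ∃ s : Finset L, ↑s ⊆ A ∧ s.inf id ≤ x} := by
  refine ⟨⟨⊤, ∅, by simp, le_top⟩, fun _ _ ⟨s, hs, hsx⟩ hxy => ⟨s, hs, hsx.trans hxy⟩, ?_⟩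
  rintro x y ⟨s, hs, hsx⟩ ⟨t, ht, hty⟩
  exact ⟨s ∪ t, by simp [hs, ht], by rw [Finset.inf_union]; exact inf_le_inf hsx hty⟩

lemma isLatIdeal_le_finset_sup (B : Set L) :
    IsLatIdeal L {x | ∃ s : Finset L, ↑s ⊆ B ∧ x ≤ s.sup id} := by
  refine ⟨⟨⊥, ∅, by simp, bot_le⟩, fun _ _ ⟨s, hs, hxs⟩ hyx => ⟨s, hs, hyx.trans hxs⟩, ?_⟩
  rintro x y ⟨s, hs, hxs⟩ ⟨t, ht, hyt⟩
  exact ⟨s ∪ t, by simp [hs, ht], by rw [Finset.sup_union]; exact sup_le_sup hxs hyt⟩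

def IsFilterIdealPair (p : Set L × Set L) : Prop :=
  IsLatFilter L p.1 ∧ IsLatIdeal L p.2 ∧ Disjoint p.1 p.2

lemma IsFilterIdealPair.pHom_ofSets {p : Set L × Set L} (hp : IsFilterIdealPair p) :
    PHom L (ofSets p.1 p.2) := by
  obtain ⟨hF, hI, hFI⟩ := hp
  simp only [PHom, ofSets_eq_some_iff hFI]
  refine ⟨hI.bot_mem, hF.top_mem, fun a b x y ha hb => ?_⟩
  cases x <;> cases y <;>
    simp only [cond_true, cond_false, min_self, max_self, Bool.le_true, inf_of_le_left,
      inf_of_le_right, sup_of_le_left, sup_of_le_right] at ha hb ⊢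
  · exact ⟨hI.2.1 ha inf_le_left, hI.2.2 ha hb⟩
  · exact ⟨hI.2.1 ha inf_le_left, hF.2.1 hb le_sup_right⟩
  · exact ⟨hI.2.1 hb inf_le_right, hF.2.1 ha le_sup_left⟩
  · exact ⟨hF.2.2 ha hb, hF.2.1 ha le_sup_left⟩

lemma PHom.not_le_of_mem_pre1_of_mem_pre0 {f : PMap L} (hf : PHom L f) {p q : L}
    (hp : p ∈ pre1 f) (hq : q ∈ pre0 f) : ¬p ≤ q := fun hpq => by
  have h : f p = some false := by simpa [inf_eq_left.2 hpq] using (hf.2.2 hp hq).1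
  exact Set.disjoint_left.1 (disjoint_pre1_pre0 f) hp h

lemma PHom.isFilterIdealPair_closure {f : PMap L} (hf : PHom L f) :
    IsFilterIdealPair ((upperClosure (pre1 f) : Set L), (lowerClosure (pre0 f) : Set L)) := by
  refine ⟨⟨⟨⊤, subset_upperClosure hf.2.1⟩, fun _ _ ha hab => (upperClosure _).upper hab ha, ?_⟩,
    ⟨⟨⊥, subset_lowerClosure hf.1⟩, fun _ _ ha hba => (lowerClosure _).lower hba ha, ?_⟩,
    Set.disjoint_left.2 ?_⟩
  · rintro a b ⟨p, hp, hpa⟩ ⟨q, hq, hqb⟩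
    exact ⟨p ⊓ q, by simpa [pre1] using (hf.2.2 hp hq).1, inf_le_inf hpa hqb⟩
  · rintro a b ⟨p, hp, hap⟩ ⟨q, hq, hbq⟩
    exact ⟨p ⊔ q, by simpa [pre0] using (hf.2.2 hp hq).2, sup_le_sup hap hbq⟩
  · rintro x ⟨p, hp, hpx⟩ ⟨q, hq, hxq⟩
    exact hf.not_le_of_mem_pre1_of_mem_pre0 hp hq (hpx.trans hxq)

lemma exists_maximal_isFilterIdealPair {p : Set L × Set L} (hp : IsFilterIdealPair p) :
    ∃ m, p ≤ m ∧ Maximal IsFilterIdealPair m := by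
  refine zorn_le_nonempty₀ {q | IsFilterIdealPair q} (fun c hc hchain q hq => ?_) p hp
  have common {a b : L} {i j : Set L × Set L → Set L} (hi : Monotone i) (hj : Monotone j)
      (ha : a ∈ ⋃ q ∈ c, i q) (hb : b ∈ ⋃ q ∈ c, j q) : ∃ t ∈ c, a ∈ i t ∧ b ∈ j t := by
    obtain ⟨r, hr, ha⟩ := Set.mem_iUnion₂.1 ha
    obtain ⟨s, hs, hb⟩ := Set.mem_iUnion₂.1 hb
    obtain ⟨t, ht, hrt, hst⟩ := hchain.directedOn r hr s hs
    exact ⟨t, ht, hi hrt ha, hj hst hb⟩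
  refine ⟨(⋃ q ∈ c, q.1, ⋃ q ∈ c, q.2), ⟨⟨?_, ?_, ?_⟩, ⟨?_, ?_, ?_⟩, Set.disjoint_left.2 ?_⟩,
    fun q hq => ⟨Set.subset_biUnion_of_mem hq, Set.subset_biUnion_of_mem hq⟩⟩
  · exact ⟨⊤, Set.mem_biUnion hq (hc hq).1.top_mem⟩
  · intro a b ha hab
    obtain ⟨r, hr, ha⟩ := Set.mem_iUnion₂.1 ha
    exact Set.mem_biUnion hr ((hc hr).1.2.1 ha hab)
  · intro a b ha hb
    obtain ⟨t, ht, ha, hb⟩ := common monotone_fst monotone_fst ha hb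
    exact Set.mem_biUnion ht ((hc ht).1.2.2 ha hb)
  · exact ⟨⊥, Set.mem_biUnion hq (hc hq).2.1.bot_mem⟩
  · intro a b ha hba
    obtain ⟨r, hr, ha⟩ := Set.mem_iUnion₂.1 ha
    exact Set.mem_biUnion hr ((hc hr).2.1.2.1 ha hba)
  · intro a b ha hb
    obtain ⟨t, ht, ha, hb⟩ := common monotone_snd monotone_snd ha hb
    exact Set.mem_biUnion ht ((hc ht).2.1.2.2 ha hb)
  · intro a ha ha'
    obtain ⟨t, ht, ha, ha'⟩ := common monotone_fst monotone_snd ha ha'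
    exact Set.disjoint_left.1 (hc ht).2.2 ha ha'

lemma ofSets_mem_MPHset {m : Set L × Set L} (hm : Maximal IsFilterIdealPair m) :
    ofSets m.1 m.2 ∈ MPHset L := by
  have hdisj := hm.1.2.2
  refine ⟨hm.1.pHom_ofSets, fun g hg hgm => ?_⟩
  rw [pExt_iff, pre1_ofSets, pre0_ofSets hdisj] at hgm
  obtain ⟨h1, h0⟩ := hgm
  have hle := hm.2 hg.isFilterIdealPair_closure
    ⟨h1.trans subset_upperClosure, h0.trans subset_lowerClosure⟩
  refine pmap_ext ?_ ?_
  · rw [pre1_ofSets]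
    exact (subset_upperClosure.trans hle.1).antisymm h1
  · rw [pre0_ofSets hdisj]
    exact (subset_lowerClosure.trans hle.2).antisymm h0

theorem exists_mph_of_isFilterIdealPair {F I : Set L} (h : IsFilterIdealPair (F, I)) :
    ∃ f : MPHsub L, F ⊆ pre1 f.1 ∧ I ⊆ pre0 f.1 := by
  obtain ⟨m, ⟨hF, hI⟩, hm⟩ := exists_maximal_isFilterIdealPair h
  exact ⟨⟨_, ofSets_mem_MPHset hm⟩, hF.trans (pre1_ofSets _ _).superset,
    hI.trans (pre0_ofSets hm.1.2.2).superset⟩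

lemma MPHsub.isFilterIdealPair (f : MPHsub L) : IsFilterIdealPair (pre1 f.1, pre0 f.1) := by
  have hclosure := f.2.1.isFilterIdealPair_closure
  have heq := f.2.2 _ hclosure.pHom_ofSets <| pExt_iff.2
    ⟨subset_upperClosure.trans (pre1_ofSets _ _).superset,
      subset_lowerClosure.trans (pre0_ofSets hclosure.2.2).superset⟩
  rwa [← heq, pre1_ofSets, pre0_ofSets hclosure.2.2]

end FilterIdeal

section CanonicalExtension

variable {L C D : Type*} [Lattice L] [BoundedOrder L] [CompleteLattice C] [CompleteLattice D]

structure IsCanonicalExtension (e : L → C) : Prop where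
  injective : Function.Injective e
  map_inf (a b : L) : e (a ⊓ b) = e a ⊓ e b
  map_sup (a b : L) : e (a ⊔ b) = e a ⊔ e b
  map_top : e ⊤ = ⊤
  map_bot : e ⊥ = ⊥
  eq_sSup_sInf (c : C) : c = sSup {x | (∃ S : Set L, x = sInf (e '' S)) ∧ x ≤ c}
  eq_sInf_sSup (c : C) : c = sInf {x | (∃ S : Set L, x = sSup (e '' S)) ∧ c ≤ x}
  compact (A B : Set L) : sInf (e '' A) ≤ sSup (e '' B) →
    ∃ A' B' : Finset L, ↑A' ⊆ A ∧ ↑B' ⊆ B ∧ sInf (e '' ↑A') ≤ sSup (e '' ↑B')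

theorem IsCanonicalExtension.orderIso_comp {e : L → C} (he : IsCanonicalExtension e)
    (Ψ : C ≃o D) : IsCanonicalExtension (Ψ ∘ e) := by
  have map_sInf_image (S : Set L) : Ψ (sInf (e '' S)) = sInf ((Ψ ∘ e) '' S) := by
    rw [Ψ.map_sInf, Set.image_comp, sInf_image]
  have map_sSup_image (S : Set L) : Ψ (sSup (e '' S)) = sSup ((Ψ ∘ e) '' S) := by
    rw [Ψ.map_sSup, Set.image_comp, sSup_image]
  refine ⟨Ψ.injective.comp he.injective, fun a b => by simp [he.map_inf],
    fun a b => by simp [he.map_sup], by simp [he.map_top], by simp [he.map_bot],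
    fun d => ?_, fun d => ?_, fun A B hAB => ?_⟩
  · obtain ⟨c, rfl⟩ := Ψ.surjective d
    refine le_antisymm ?_ (sSup_le fun _ hy => hy.2)
    calc Ψ c = ⨆ x ∈ {x | (∃ S : Set L, x = sInf (e '' S)) ∧ x ≤ c}, Ψ x := by
          rw [← Ψ.map_sSup, ← he.eq_sSup_sInf]
      _ ≤ _ := by
          refine iSup₂_le fun x hx => le_sSup ⟨?_, Ψ.monotone hx.2⟩
          obtain ⟨S, rfl⟩ := hx.1
          exact ⟨S, map_sInf_image S⟩
  · obtain ⟨c, rfl⟩ := Ψ.surjective d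
    refine le_antisymm (le_sInf fun _ hy => hy.2) ?_
    calc _ ≤ ⨅ x ∈ {x | (∃ S : Set L, x = sSup (e '' S)) ∧ c ≤ x}, Ψ x := by
          refine le_iInf₂ fun x hx => sInf_le ⟨?_, Ψ.monotone hx.2⟩
          obtain ⟨S, rfl⟩ := hx.1
          exact ⟨S, map_sSup_image S⟩
      _ = Ψ c := by rw [← Ψ.map_sInf, ← he.eq_sInf_sSup]
  · rw [← map_sInf_image, ← map_sSup_image, Ψ.le_iff_le] at hAB
    obtain ⟨A', B', hA', hB', hAB'⟩ := he.compact A B hAB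
    exact ⟨A', B', hA', hB', by rwa [← map_sInf_image, ← map_sSup_image, Ψ.le_iff_le]⟩

theorem IsCanonicalExtension.transfer {α : Type*} {e : L → C} (he : IsCanonicalExtension e)
    (Φ : α ≃ C) :
    letI := Φ.completeLattice
    IsCanonicalExtension (Φ.symm ∘ e) := by
  let _ := Φ.completeLattice
  refine he.orderIso_comp ⟨Φ.symm, fun {a b} => ?_⟩
  show Φ (Φ.symm a) ≤ Φ (Φ.symm b) ↔ a ≤ b
  rw [Φ.apply_symm_apply, Φ.apply_symm_apply]

end CanonicalExtension

section Dflat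

variable {L : Type*} [Lattice L] [BoundedOrder L]

instance : Std.Refl (EM L) := ⟨fun f => erelP_iff.2 (disjoint_pre1_pre0 f.1)⟩

lemma not_EM_iff {f g : MPHsub L} : ¬EM L f g ↔ ∃ c, f ∈ WaM L c ∧ g ∈ VaM L c := by
  rw [EM, erelP_iff, Set.not_disjoint_iff]
  rfl

lemma EM_of_pre1_subset {f g h : MPHsub L} (hfg : pre1 f.1 ⊆ pre1 g.1) (hgh : EM L g h) :
    EM L f h :=
  erelP_iff.2 ((erelP_iff.1 hgh).mono_left hfg)

lemma EM_of_pre0_subset {f h k : MPHsub L} (hhk : pre0 h.1 ⊆ pre0 k.1) (hfk : EM L f k) :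
    EM L f h :=
  erelP_iff.2 ((erelP_iff.1 hfk).mono_right hhk)

lemma exists_EM_mem_VaM {f : MPHsub L} {a : L} (ha : f ∉ WaM L a) :
    ∃ g, g ∈ VaM L a ∧ EM L f g := by
  have hfilter := f.isFilterIdealPair.1
  obtain ⟨g, hfg, hag⟩ := exists_mph_of_isFilterIdealPair (F := pre1 f.1) (I := Set.Iic a)
    ⟨hfilter, isLatIdeal_Iic a, Set.disjoint_left.2 fun x hx hxa => ha (hfilter.2.1 hx hxa)⟩
  exact ⟨g, hag le_rfl, erelP_iff.2 ((disjoint_pre1_pre0 g.1).mono_left hfg)⟩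

lemma exists_EM_mem_WaM {f : MPHsub L} {a : L} (ha : f ∉ VaM L a) :
    ∃ g, g ∈ WaM L a ∧ EM L g f := by
  have hideal := f.isFilterIdealPair.2.1
  obtain ⟨g, hag, hfg⟩ := exists_mph_of_isFilterIdealPair (F := Set.Ici a) (I := pre0 f.1)
    ⟨isLatFilter_Ici a, hideal, Set.disjoint_left.2 fun x hax hx => ha (hideal.2.1 hx hax)⟩
  exact ⟨g, hag le_rfl, erelP_iff.2 ((disjoint_pre1_pre0 g.1).mono_right hfg)⟩

lemma upperPolar_WaM (a : L) : upperPolar (¬EM L · ·) (WaM L a) = VaM L a := by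
  ext h
  refine ⟨fun hh => ?_, fun hV g hg => not_EM_iff.2 ⟨a, hg, hV⟩⟩
  by_contra hV
  obtain ⟨g, hg, hgh⟩ := exists_EM_mem_WaM hV
  exact hh hg hgh

lemma lowerPolar_VaM (a : L) : lowerPolar (¬EM L · ·) (VaM L a) = WaM L a := by
  ext f
  refine ⟨fun hf => ?_, fun hW h hh => not_EM_iff.2 ⟨a, hW, hh⟩⟩
  by_contra hW
  obtain ⟨g, hg, hfg⟩ := exists_EM_mem_VaM hW
  exact hf hg hfg

lemma WaM_subset_WaM_iff {a b : L} : WaM L a ⊆ WaM L b ↔ a ≤ b := by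
  refine ⟨fun h => ?_, fun hab f hf => f.isFilterIdealPair.1.2.1 hf hab⟩
  by_contra hab
  obtain ⟨f, ha, hb⟩ := exists_mph_of_isFilterIdealPair (F := Set.Ici a) (I := Set.Iic b)
    ⟨isLatFilter_Ici a, isLatIdeal_Iic b, Set.disjoint_left.2 fun x hax hxb => hab (hax.trans hxb)⟩
  exact Set.disjoint_left.1 (disjoint_pre1_pre0 f.1) (h (ha le_rfl)) (hb le_rfl)

variable (L) in
abbrev EMConcept := Concept (MPHsub L) (MPHsub L) (¬EM L · ·)

def embed (a : L) : EMConcept L := ⟨WaM L a, VaM L a, upperPolar_WaM a, lowerPolar_VaM a⟩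

lemma embed_le_embed_iff {a b : L} : embed a ≤ embed b ↔ a ≤ b := by
  rw [← Concept.extent_subset_extent_iff]
  exact WaM_subset_WaM_iff

lemma extent_sInf_image_embed (S : Set L) :
    (sInf (embed '' S)).extent = {f | S ⊆ pre1 f.1} := by
  ext f
  simp [Set.subset_def, embed, WaM, pre1]

lemma intent_sSup_image_embed (S : Set L) :
    (sSup (embed '' S)).intent = {h | S ⊆ pre0 h.1} := by
  ext h
  simp [Set.subset_def, embed, VaM, pre0]

lemma sInf_image_embed_finset (s : Finset L) : sInf (embed '' ↑s) = embed (s.inf id) :=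
  Concept.ext <| by
    rw [extent_sInf_image_embed]
    ext f
    exact f.isFilterIdealPair.1.finset_inf_mem_iff.symm

lemma sSup_image_embed_finset (s : Finset L) : sSup (embed '' ↑s) = embed (s.sup id) :=
  Concept.ext' <| by
    rw [intent_sSup_image_embed]
    ext h
    exact h.isFilterIdealPair.2.1.finset_sup_mem_iff.symm

lemma eq_sSup_sInf_embed (c : EMConcept L) :
    c = sSup {x | (∃ S : Set L, x = sInf (embed '' S)) ∧ x ≤ c} := by
  refine le_antisymm ?_ (sSup_le fun _ hx => hx.2)
  rw [← Concept.extent_subset_extent_iff]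
  intro f hf
  rw [← c.lowerPolar_intent] at hf
  have hle : sInf (embed '' pre1 f.1) ≤ c := by
    rw [← Concept.extent_subset_extent_iff, extent_sInf_image_embed, ← c.lowerPolar_intent]
    intro g hfg h hh hgh
    exact hf hh (EM_of_pre1_subset hfg hgh)
  have hmem : sInf (embed '' pre1 f.1) ∈
      {x : EMConcept L | (∃ S : Set L, x = sInf (embed '' S)) ∧ x ≤ c} :=
    ⟨⟨_, rfl⟩, hle⟩
  refine Concept.extent_subset_extent_iff.2 (le_sSup hmem) ?_
  rw [extent_sInf_image_embed]
  exact Set.Subset.rfl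

lemma eq_sInf_sSup_embed (c : EMConcept L) :
    c = sInf {x | (∃ S : Set L, x = sSup (embed '' S)) ∧ c ≤ x} := by
  refine le_antisymm (le_sInf fun _ hx => hx.2) ?_
  rw [← Concept.intent_subset_intent_iff]
  intro h hh
  rw [← c.upperPolar_extent] at hh
  have hle : c ≤ sSup (embed '' pre0 h.1) := by
    rw [← Concept.intent_subset_intent_iff, intent_sSup_image_embed, ← c.upperPolar_extent]
    intro k hhk f hf hfk
    exact hh hf (EM_of_pre0_subset hhk hfk)
  have hmem : sSup (embed '' pre0 h.1) ∈
      {x : EMConcept L | (∃ S : Set L, x = sSup (embed '' S)) ∧ c ≤ x} :=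
    ⟨⟨_, rfl⟩, hle⟩
  refine Concept.intent_subset_intent_iff.2 (sInf_le hmem) ?_
  rw [intent_sSup_image_embed]
  exact Set.Subset.rfl

lemma compact_embed (A B : Set L) (hAB : sInf (embed '' A) ≤ sSup (embed '' B)) :
    ∃ A' B' : Finset L, ↑A' ⊆ A ∧ ↑B' ⊆ B ∧
      sInf (embed '' (A' : Set L)) ≤ sSup (embed '' (B' : Set L)) := by
  by_contra! hno
  have hdisj : Disjoint {x | ∃ s : Finset L, ↑s ⊆ A ∧ s.inf id ≤ x}
      {x | ∃ s : Finset L, ↑s ⊆ B ∧ x ≤ s.sup id} := by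
    refine Set.disjoint_left.2 ?_
    rintro x ⟨s, hsA, hsx⟩ ⟨t, htB, hxt⟩
    refine hno s t hsA htB ?_
    rw [sInf_image_embed_finset, sSup_image_embed_finset, embed_le_embed_iff]
    exact hsx.trans hxt
  obtain ⟨f, hA, hB⟩ := exists_mph_of_isFilterIdealPair
    ⟨isLatFilter_finset_inf_le A, isLatIdeal_le_finset_sup B, hdisj⟩
  have hf : f ∈ (sInf (embed '' A)).extent := by
    rw [extent_sInf_image_embed]
    exact fun a ha => hA ⟨{a}, by simpa using ha, by simp⟩
  have hf' := Concept.extent_subset_extent_iff.2 hAB hf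
  rw [← Concept.lowerPolar_intent, intent_sSup_image_embed] at hf'
  exact hf' (fun b hb => hB ⟨{b}, by simpa using hb, by simp⟩) (refl f)

theorem isCanonicalExtension_embed : IsCanonicalExtension (embed : L → EMConcept L) where
  injective _ _ h := le_antisymm (embed_le_embed_iff.1 h.le) (embed_le_embed_iff.1 h.ge)
  map_inf a b := by simpa [Set.image_pair, sInf_pair] using (sInf_image_embed_finset {a, b}).symm
  map_sup a b := by simpa [Set.image_pair, sSup_pair] using (sSup_image_embed_finset {a, b}).symm
  map_top := by simpa using (sInf_image_embed_finset (∅ : Finset L)).symm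
  map_bot := by simpa using (sSup_image_embed_finset (∅ : Finset L)).symm
  eq_sSup_sInf := eq_sSup_sInf_embed
  eq_sInf_sSup := eq_sInf_sSup_embed
  compact := compact_embed

end Dflat

/-- **Canonical extension.** Let `L` be a bounded lattice and
`X = D♭(L)`. The complete lattice `C(X) = MPE(X,2)`, ordered by
`φ ≤ ψ ↔ φ⁻¹(1) ⊆ ψ⁻¹(1)`, together with the embedding `a ↦ e_a`, is a
canonical extension of `L`: a completion of `L` that is dense and compact. -/
theorem stmt_11 (L : Type*) [Lattice L] [BoundedOrder L] :
    ∃ inst : CompleteLattice (CX L),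
      (∀ φ ψ : CX L, inst.le φ ψ ↔ pre1 φ.1 ⊆ pre1 ψ.1) ∧
      ∃ e : L → CX L,
        (∀ a : L, (e a).1 = evalM L a) ∧
        Function.Injective e ∧
        (∀ a b : L, e (a ⊓ b) = inst.inf (e a) (e b)) ∧
        (∀ a b : L, e (a ⊔ b) = inst.sup (e a) (e b)) ∧
        e ⊤ = inst.top ∧ e ⊥ = inst.bot ∧
        (∀ φ : CX L,
          φ = inst.sSup {ψ : CX L | (∃ S : Set L, ψ = inst.sInf (e '' S)) ∧ inst.le ψ φ} ∧
          φ = inst.sInf {ψ : CX L | (∃ S : Set L, ψ = inst.sSup (e '' S)) ∧ inst.le φ ψ}) ∧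
        (∀ A B : Set L,
          inst.le (inst.sInf (e '' A)) (inst.sSup (e '' B)) →
          ∃ A' B' : Finset L, ↑A' ⊆ A ∧ ↑B' ⊆ B ∧
            inst.le (inst.sInf (e '' ↑A')) (inst.sSup (e '' ↑B'))) := by
  let Φ := MPE.equivConcept (EM L)
  -- not a global instance: `CX L` already carries the pointwise order of partial maps
  let inst : CompleteLattice (CX L) := Φ.completeLattice
  have he : IsCanonicalExtension (Φ.symm ∘ embed) := isCanonicalExtension_embed.transfer Φ
  exact ⟨inst, fun _ _ => Iff.rfl, Φ.symm ∘ embed, fun a => ofSets_pre1_pre0 (evalM L a),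
    he.injective, he.map_inf, he.map_sup, he.map_top, he.map_bot,
    fun φ => ⟨he.eq_sSup_sInf φ, he.eq_sInf_sSup φ⟩, he.compact⟩

end CanExt
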